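/- Let F be a field of characteristic zero and n ≥ 4. The n−2 polynomials ξ_0, ξ_1, …, ξ_{n−3} ∈ F[x_1, …, x_{n−1}] are algebraically independent over F (so the nilpotent Lie algebra n_{n,1} has n−2 functionally independent polynomial invariants of its coadjoint representation). -/
import Mathlib


open MvPolynomial in
/-- The polynomial invariants `ξ_k` of the coadjoint representation of `n_{n,1}`,
as polynomials in the variables `x 1, x 2, …` :  `ξ_0 = x 1` and, for `k ≥ 1`,
`ξ_k = ((-1)^k k/(k+1)!) x_2^{k+1} + Σ_{j=0}^{k-1} ((-1)^j/j!) x_2^j x_{k+2-j} x_1^{k-j}`. -/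
noncomputable def xi (F : Type*) [Field F] : ℕ → MvPolynomial ℕ F
  | 0 => X 1
  | k + 1 =>
      C ((-1 : F) ^ (k + 1) * ((k + 1 : ℕ) : F) / (((k + 2).factorial : ℕ) : F)) *
          X 2 ^ (k + 2) +
        ∑ j ∈ Finset.range (k + 1),
          C ((-1 : F) ^ j / ((j.factorial : ℕ) : F)) * X 2 ^ j *
            X (k + 3 - j) * X 1 ^ (k + 1 - j)

open MvPolynomial in
/-- The `n-2` polynomials `ξ_0, ξ_1, …, ξ_{n-3}` are algebraically
independent over `F`:  `n_{n,1}` has `n-2` functionally independent polynomial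
invariants of its coadjoint representation. -/
theorem xi_algebraically_independent
    (F : Type*) [Field F] [CharZero F] (n : ℕ) (hn : 4 ≤ n) :
    AlgebraicIndependent F (fun k : Fin (n - 2) => xi F k.val) := by
  classical
  set R := MvPolynomial ℕ F with hR
  let K := FractionRing R
  let a : R →+* K := algebraMap R K
  have ha : Function.Injective a := IsFractionRing.injective R K
  have hx1 : a (X 1) ≠ 0 := by
    intro h
    rw [← map_zero a] at h
    have hX : (X 1 : R) ≠ 0 := MvPolynomial.X_ne_zero 1
    exact hX (ha h)
  -- the substitution x₂ ↦ 0, x_m ↦ x_m / x₁^{m-2}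
  let w : ℕ → K := fun m => if m = 2 then 0 else a (X m) / (a (X 1)) ^ (m - 2)
  have hw2 : w 2 = 0 := by simp [w]
  have hw1 : w 1 = a (X 1) := by simp [w]
  have hw : ∀ k : ℕ, aeval w (xi F k) = a (X (if k = 0 then 1 else k + 2)) := by
    intro k
    cases k with
    | zero => simp [xi, w]
    | succ k =>
      have h2 : (k : ℕ) + 1 + 2 = k + 3 := by omega
      simp only [xi, map_add, map_mul, map_pow, map_sum, aeval_C, aeval_X]
      rw [hw2, zero_pow (by omega : (k : ℕ) + 2 ≠ 0)]
      rw [Finset.sum_eq_single 0]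
      · have hw3 : w (k + 3) = a (X (k + 3)) / (a (X 1)) ^ (k + 1) := by
          simp only [w, if_neg (by omega : (k : ℕ) + 3 ≠ 2)]
          have h3 : (k : ℕ) + 3 - 2 = k + 1 := by omega
          rw [h3]
        simp only [pow_zero, Nat.factorial_zero, Nat.cast_one, div_one, map_one, one_mul,
          Nat.sub_zero, hw3, hw1]
        rw [div_mul_cancel₀ _ (pow_ne_zero _ hx1)]
        simp only [if_neg (Nat.succ_ne_zero k), mul_zero, zero_add, h2]
      · intro j hj hj0
        rw [zero_pow hj0]
        ring
      · intro h
        exact absurd (Finset.mem_range.mpr (Nat.succ_pos k)) h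
  -- the index renaming
  let idx : Fin (n - 2) → ℕ := fun k => if k.val = 0 then 1 else k.val + 2
  have hidx : Function.Injective idx := by
    intro p q h
    simp only [idx] at h
    apply Fin.ext
    by_cases hp : p.val = 0 <;> by_cases hq : q.val = 0 <;>
      simp [hp, hq] at h <;> omega
  -- the composed algebra hom equals algebraMap ∘ rename idx
  have hcomp : (aeval w).comp (aeval (fun k : Fin (n - 2) => xi F k.val)) =
      (IsScalarTower.toAlgHom F R K).comp (rename idx) := by
    apply MvPolynomial.algHom_ext
    intro i
    rw [AlgHom.comp_apply, AlgHom.comp_apply, aeval_X, rename_X,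
      IsScalarTower.toAlgHom_apply]
    exact hw i.val
  have hinj : Function.Injective
      (⇑(aeval (R := F) w) ∘ ⇑(aeval (R := F) (fun k : Fin (n - 2) => xi F k.val))) := by
    have heq : ⇑(aeval (R := F) w) ∘ ⇑(aeval (R := F) (fun k : Fin (n - 2) => xi F k.val)) =
        ⇑((IsScalarTower.toAlgHom F R K).comp (rename idx)) := by
      rw [← hcomp]; rfl
    rw [heq]
    have : ⇑((IsScalarTower.toAlgHom F R K).comp (rename idx)) =
        a ∘ ⇑(rename idx) := rfl
    rw [this]
    exact ha.comp (rename_injective idx hidx)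
  rw [algebraicIndependent_iff_injective_aeval]
  exact Function.Injective.of_comp hinj
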